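/- arXiv:1310.1279 — 3 statements merged into one kernel-verified Lean document; each statement's English description precedes it below -/
import Mathlib

section
/- Let A be a unital C*-algebra, t ↦ I(t) ∈ A continuous self-adjoint, R(s,·) the unique solution of ∂_σ R(s,σ) = -i R(s,σ) I(s,σ) with R(s,s) = 1 where I(s,σ) ∈ A and R(s,σ) is unitary, and let A(s,t) ∈ A with ‖A(s,t)‖ bounded. If G(σ) := [I(s,σ), A(s,t)] and F(σ) := [R(s,σ), A(s,t)], then ‖F(t)‖ ≤ ∫_s^t ‖G(σ)‖ dσ, i.e. ‖R(s,t) A(s,t) R(s,t)* − A(s,t)‖ ≤ ∫_s^t ‖[I(s,σ), A(s,t)]‖ dσ. -/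
open MeasureTheory intervalIntegral

variable {A : Type*} [NormedRing A] [StarRing A] [CStarRing A]
  [NormedAlgebra ℂ A] [CompleteSpace A]

/-- let `σ ↦ I σ` be continuous and self-adjoint valued, let
`R` be the unique solution of `∂_σ R(σ) = -i R(σ) I(σ)`, `R(s) = 1`, with
`R(σ)` unitary, and let `B ∈ A`. Then
`‖R(t) B R(t)* − B‖ ≤ ∫_s^t ‖[I(σ), B]‖ dσ` for `s ≤ t`. -/
theorem commutator_bound_interacting_dynamics
    (s t : ℝ) (hst : s ≤ t)
    (Iop : ℝ → A) (hIcont : Continuous Iop) (hIsa : ∀ σ, IsSelfAdjoint (Iop σ))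
    (R : ℝ → A)
    (hR : ∀ σ : ℝ, HasDerivAt R (-Complex.I • (R σ * Iop σ)) σ)
    (hRs : R s = 1)
    (hRu : ∀ σ : ℝ, star (R σ) * R σ = 1 ∧ R σ * star (R σ) = 1)
    (B : A) :
    ‖R t * B * star (R t) - B‖ ≤ ∫ σ in s..t, ‖Iop σ * B - B * Iop σ‖ := by
  -- star as a continuous real-linear map
  let starCLM : A →L[ℝ] A :=
    AddMonoidHom.toRealLinearMap (starAddEquiv : A ≃+ A).toAddMonoidHom continuous_star
  have hstarCLM : ∀ x : A, starCLM x = star x := fun x => rfl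
  -- norm bounds
  have hone : ‖(1 : A)‖ ≤ 1 := by
    have h := CStarRing.norm_star_mul_self (x := (1 : A))
    simp only [star_one, one_mul] at h
    nlinarith [norm_nonneg (1 : A)]
  have hnR : ∀ σ, ‖R σ‖ ≤ 1 := by
    intro σ
    have h := CStarRing.norm_star_mul_self (x := R σ)
    rw [(hRu σ).1] at h
    nlinarith [norm_nonneg (R σ)]
  have hnRs : ∀ σ, ‖star (R σ)‖ ≤ 1 := fun σ => by rw [norm_star]; exact hnR σ
  -- continuity of R
  have hRcont : Continuous R := by
    rw [continuous_iff_continuousAt]; exact fun σ => (hR σ).continuousAt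
  -- derivative of star ∘ R
  have hSd : ∀ σ, HasDerivAt (fun τ => star (R τ))
      (Complex.I • (Iop σ * star (R σ))) σ := by
    intro σ
    have h1 : HasDerivAt (fun τ => star (R τ))
        (starCLM (-Complex.I • (R σ * Iop σ))) σ :=
      starCLM.hasFDerivAt.comp_hasDerivAt σ (hR σ)
    -- identify the derivative using unitarity
    have h2 : HasDerivAt (fun τ => star (R τ) * R τ)
        (starCLM (-Complex.I • (R σ * Iop σ)) * R σ
          + star (R σ) * (-Complex.I • (R σ * Iop σ))) σ := h1.mul (hR σ)
    have h3 : HasDerivAt (fun _ : ℝ => (1 : A)) 0 σ := hasDerivAt_const σ 1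
    have h4 : HasDerivAt (fun τ => star (R τ) * R τ) 0 σ := by
      have : (fun τ => star (R τ) * R τ) = fun _ : ℝ => (1 : A) := by
        funext τ; exact (hRu τ).1
      rw [this]; exact h3
    have h5 : starCLM (-Complex.I • (R σ * Iop σ)) * R σ
        + star (R σ) * (-Complex.I • (R σ * Iop σ)) = 0 := h2.unique h4
    have h6 : starCLM (-Complex.I • (R σ * Iop σ))
        = -(star (R σ) * (-Complex.I • (R σ * Iop σ))) * star (R σ) := by
      have := congrArg (· * star (R σ)) h5
      simp only [add_mul, zero_mul, mul_assoc, (hRu σ).2, mul_one] at this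
      linear_combination (norm := noncomm_ring) this
    have h7 : -(star (R σ) * (-Complex.I • (R σ * Iop σ))) * star (R σ)
        = Complex.I • (Iop σ * star (R σ)) := by
      rw [mul_smul_comm, neg_smul, neg_neg, smul_mul_assoc]
      congr 1
      rw [← mul_assoc, (hRu σ).1, one_mul]
    have := h1
    rw [h6, h7] at this
    exact this
  -- derivative of F
  set D : ℝ → A := fun σ =>
    (-Complex.I) • (R σ * (Iop σ * B - B * Iop σ) * star (R σ)) with hD
  have hF : ∀ σ, HasDerivAt (fun τ => R τ * B * star (R τ) - B) (D σ) σ := by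
    intro σ
    have h1 : HasDerivAt (fun τ => R τ * B * star (R τ) - B)
        ((-Complex.I • (R σ * Iop σ)) * B * star (R σ)
          + R σ * B * (Complex.I • (Iop σ * star (R σ)))) σ :=
      (((hR σ).mul_const B).mul (hSd σ)).sub_const B
    have e1 : R σ * (Iop σ * B - B * Iop σ) * star (R σ)
        = (R σ * Iop σ) * B * star (R σ) - R σ * B * (Iop σ * star (R σ)) := by
      noncomm_ring
    have e2 : (-Complex.I • (R σ * Iop σ)) * B * star (R σ)
        + R σ * B * (Complex.I • (Iop σ * star (R σ))) = D σ := by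
      rw [smul_mul_assoc, smul_mul_assoc, mul_smul_comm, hD]
      simp only
      rw [e1, smul_sub, sub_eq_add_neg, ← neg_smul, neg_neg]
    rw [← e2]
    exact h1
  -- continuity of D
  have hDcont : Continuous D := by
    apply Continuous.smul continuous_const
    exact ((hRcont.mul ((hIcont.mul continuous_const).sub
      (continuous_const.mul hIcont))).mul (continuous_star.comp hRcont))
  -- FTC
  have hInt : IntervalIntegrable D volume s t := hDcont.intervalIntegrable s t
  have hFTC : (∫ σ in s..t, D σ) = (R t * B * star (R t) - B) - (R s * B * star (R s) - B) :=
    integral_eq_sub_of_hasDerivAt (fun σ _ => hF σ) hInt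
  have hFs : R s * B * star (R s) - B = 0 := by rw [hRs]; simp
  have heq : R t * B * star (R t) - B = ∫ σ in s..t, D σ := by
    rw [hFTC, hFs, sub_zero]
  rw [heq]
  have hbound : ∀ σ, ‖D σ‖ ≤ ‖Iop σ * B - B * Iop σ‖ := by
    intro σ
    rw [hD]
    simp only [norm_smul, norm_neg, Complex.norm_I, one_mul]
    calc ‖R σ * (Iop σ * B - B * Iop σ) * star (R σ)‖
        ≤ ‖R σ * (Iop σ * B - B * Iop σ)‖ * ‖star (R σ)‖ := norm_mul_le _ _
      _ ≤ ‖R σ‖ * ‖Iop σ * B - B * Iop σ‖ * ‖star (R σ)‖ := by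
          gcongr; exact norm_mul_le _ _
      _ ≤ ‖R σ‖ * ‖Iop σ * B - B * Iop σ‖ :=
          mul_le_of_le_one_right (by positivity) (hnRs σ)
      _ ≤ ‖Iop σ * B - B * Iop σ‖ :=
          mul_le_of_le_one_left (norm_nonneg _) (hnR σ)
  calc ‖∫ σ in s..t, D σ‖ ≤ ∫ σ in s..t, ‖D σ‖ :=
        intervalIntegral.norm_integral_le_integral_norm hst
    _ ≤ ∫ σ in s..t, ‖Iop σ * B - B * Iop σ‖ := by
        exact intervalIntegral.integral_mono_on hst hInt.norm
          (((hIcont.mul continuous_const).sub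
            (continuous_const.mul hIcont)).norm.intervalIntegrable s t)
          (fun σ _ => hbound σ)
end

section
/- Let ω₁, ω₂ be states on C*-algebras A₁, A₂ respectively such that for all a_i, b_i: ω₁(a₁*b₁) and ω₂(a₂*b₂) define positive semidefinite Gram matrices. If ω₁ is even with respect to a ℤ₂-grading of A₁ (ω₁ vanishes on odd elements), then the functional ω₁⊗ω₂ on the ℤ₂-graded tensor product, defined on homogeneous simple tensors by (ω₁⊗ω₂)(a₁⊗a₂) = ω₁(a₁)ω₂(a₂), is positive: (ω₁⊗ω₂)(A*A) ≥ 0 for A = ∑_i λ_i a_{1i}⊗a_{2i} with a_{ki} homogeneous. -/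
/-!
Since `ω₁` is even, every term of the sum carrying the sign `-1` vanishes, so the sum is the
quadratic form of the Hadamard product of the Gram matrices of `ω₁` and `ω₂` evaluated at `l`.
Both Gram matrices are positive semidefinite, hence so is their Hadamard product by the Schur
product theorem.
-/

open scoped ComplexOrder
open Matrix

-- Fails over `ℝ`; over `ℂ` polarization makes a real-valued quadratic form Hermitian.
theorem Matrix.posSemidef_of_forall_dotProduct_mulVec_nonneg {n : Type*} [Fintype n]
    {M : Matrix n n ℂ} (hM : ∀ x, 0 ≤ star x ⬝ᵥ (M *ᵥ x)) : M.PosSemidef := by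
  classical
  rw [← isPositive_toEuclideanLin_iff, LinearMap.isPositive_iff_complex]
  intro x
  have hx := hM x.ofLp
  have hinner : inner ℂ (M.toEuclideanLin x) x = star (star x.ofLp ⬝ᵥ (M *ᵥ x.ofLp)) := by
    rw [EuclideanSpace.inner_eq_star_dotProduct, dotProduct_star, dotProduct_comm (star _)]
    simp
  rw [hinner, (IsSelfAdjoint.of_nonneg hx).star_eq]
  exact ⟨Complex.ext rfl (Complex.nonneg_iff.mp hx).2, (Complex.nonneg_iff.mp hx).1⟩

theorem Matrix.star_dotProduct_mulVec_eq_sum {n R : Type*} [Fintype n] [CommSemiring R]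
    [StarRing R] (M : Matrix n n R) (x : n → R) :
    star x ⬝ᵥ (M *ᵥ x) = ∑ i, ∑ j, star (x i) * x j * M i j := by
  simp only [dotProduct, mulVec, Pi.star_apply, Finset.mul_sum]
  exact Finset.sum_congr rfl fun i _ => Finset.sum_congr rfl fun j _ => by ring

def gramMatrix {ι A : Type*} [Mul A] [Star A] [AddCommMonoid A] [Module ℂ A]
    (ω : A →ₗ[ℂ] ℂ) (a : ι → A) : Matrix ι ι ℂ :=
  of fun i j => ω (star (a i) * a j)

theorem gramMatrix_posSemidef {A : Type*} [Ring A] [StarRing A] [Algebra ℂ A]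
    {ω : A →ₗ[ℂ] ℂ}
    (hω : ∀ (m : ℕ) (a : Fin m → A) (μ : Fin m → ℂ),
      0 ≤ ∑ i, ∑ j, (starRingEnd ℂ) (μ i) * μ j * ω (star (a i) * a j))
    {n : ℕ} (a : Fin n → A) : (gramMatrix ω a).PosSemidef :=
  posSemidef_of_forall_dotProduct_mulVec_nonneg fun μ => by
    simpa [star_dotProduct_mulVec_eq_sum, gramMatrix] using hω n a μ

theorem neg_one_pow_val_mul_add_mul_eq_self {R : Type*} [Ring R]
    {d d' : ZMod 2} {c : R} (hc : d ≠ d' → c = 0) (e : ZMod 2) :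
    (-1 : R) ^ (e * (d + d')).val * c = c := by
  by_cases h : d = d'
  · rw [h, CharTwo.add_self_eq_zero, mul_zero, ZMod.val_zero, pow_zero, one_mul]
  · rw [hc h, mul_zero]

/-- positivity of the ℤ₂-graded tensor product of states.
`ω₁, ω₂` are positive functionals (their Gram matrices are positive
semidefinite, expressed by `hpos₁, hpos₂`), the elements `a₁ i` (resp.
`a₂ i`) are homogeneous of degree `d₁ i` (resp. `d₂ i`), and `ω₁` is even:
it vanishes on products of homogeneous elements of different degree
(`heven`).  Then `(ω₁ ⊗ ω₂)(A* A) ≥ 0` for `A = ∑ᵢ λᵢ a₁ᵢ ⊗ a₂ᵢ`, where by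
the graded multiplication and involution rules
`(ω₁ ⊗ ω₂)(A* A) = ∑_{i,j} conj(λᵢ) λⱼ (-1)^{d₂ᵢ(d₁ᵢ+d₁ⱼ)} ω₁(a₁ᵢ* a₁ⱼ) ω₂(a₂ᵢ* a₂ⱼ)`. -/
theorem graded_tensor_product_state_positive
    {A₁ A₂ : Type*} [Ring A₁] [StarRing A₁] [Algebra ℂ A₁]
    [Ring A₂] [StarRing A₂] [Algebra ℂ A₂]
    (ω₁ : A₁ →ₗ[ℂ] ℂ) (ω₂ : A₂ →ₗ[ℂ] ℂ)
    (hpos₁ : ∀ (m : ℕ) (a : Fin m → A₁) (μ : Fin m → ℂ),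
      0 ≤ ∑ i, ∑ j, (starRingEnd ℂ) (μ i) * μ j * ω₁ (star (a i) * a j))
    (hpos₂ : ∀ (m : ℕ) (a : Fin m → A₂) (μ : Fin m → ℂ),
      0 ≤ ∑ i, ∑ j, (starRingEnd ℂ) (μ i) * μ j * ω₂ (star (a i) * a j))
    (n : ℕ) (a₁ : Fin n → A₁) (a₂ : Fin n → A₂)
    (d₁ d₂ : Fin n → ZMod 2) (l : Fin n → ℂ)
    (heven : ∀ i j, d₁ i ≠ d₁ j → ω₁ (star (a₁ i) * a₁ j) = 0) :
    0 ≤ ∑ i, ∑ j,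
      (starRingEnd ℂ) (l i) * l j *
        (-1 : ℂ) ^ ((d₂ i * (d₁ i + d₁ j)).val) *
        ω₁ (star (a₁ i) * a₁ j) * ω₂ (star (a₂ i) * a₂ j) := by
  have hsign i j := neg_one_pow_val_mul_add_mul_eq_self (heven i j) (d₂ i)
  have hschur := (gramMatrix_posSemidef hpos₁ a₁).hadamard (gramMatrix_posSemidef hpos₂ a₂)
  convert hschur.dotProduct_mulVec_nonneg l using 1
  simp only [star_dotProduct_mulVec_eq_sum, hadamard_apply, gramMatrix, of_apply,
    Complex.star_def]
  refine Finset.sum_congr rfl fun i _ => Finset.sum_congr rfl fun j _ => ?_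
  rw [mul_assoc _ ((-1 : ℂ) ^ _), hsign]
  ring
end

section
/- Let u(s,t) : h_t → h_s be the propagator of the free half-line transport system ∂_s ψ + L ∂_x ψ = 0 on x > z(s) with boundary condition ψ₁(s,z(s)) = λ(s) ψ₂(s,z(s)), where h_t = L²((z(t),∞),ℂ²) and λ(t) = ((1+ż(t))/(1−ż(t)))^{1/2}. Then u(s,t) is unitary from h_t to h_s; equivalently, the L² norm ∫_{z(s)}^∞ ‖ψ(s,x)‖² dx is conserved along solutions. -/
/-!
The energy density `‖ψ₁‖² + ‖ψ₂‖²` obeys the local conservation law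
`∂ₛ (‖ψ₁‖² + ‖ψ₂‖²) = ∂ₓ (‖ψ₂‖² - ‖ψ₁‖²)`. Differentiating the energy `∫_{z(s)}^∞` under the
integral sign, with the moving lower limit, leaves only boundary terms; the one at infinity
vanishes by compact support and the one at `x = z(s)` equals
`(1 - ż) ‖ψ₁‖² - (1 + ż) ‖ψ₂‖²`, which the reflection condition `λ² = (1 + ż) / (1 - ż)` kills.
-/

open MeasureTheory Set Filter Topology Asymptotics
open scoped Interval RealInnerProductSpace

section LeibnizRule

variable {F F' : ℝ × ℝ → ℝ}

theorem exists_abs_sub_le_mul_of_hasDerivAt_fst (hF' : Continuous F')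
    (hFF' : ∀ t x, HasDerivAt (fun σ => F (σ, x)) (F' (t, x)) t) (s₀ : ℝ) {K : Set ℝ}
    (hK : IsCompact K) :
    ∃ C, ∀ s ∈ Icc (s₀ - 1) (s₀ + 1), ∀ x ∈ K, |F (s, x) - F (s₀, x)| ≤ C * |s - s₀| := by
  obtain ⟨C, hC⟩ := (isCompact_Icc.prod hK).exists_bound_of_continuousOn hF'.continuousOn
  refine ⟨C, fun s hs x hx => ?_⟩
  simpa only [Real.norm_eq_abs] using Convex.norm_image_sub_le_of_norm_hasDerivWithin_le
    (fun t _ => (hFF' t x).hasDerivWithinAt) (fun t ht => hC (t, x) ⟨ht, hx⟩)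
    (convex_Icc _ _) (mem_Icc.2 ⟨by linarith, by linarith⟩ : s₀ ∈ Icc (s₀ - 1) (s₀ + 1)) hs

theorem isLittleO_intervalIntegral_sub_param (hF' : Continuous F')
    (hFF' : ∀ t x, HasDerivAt (fun σ => F (σ, x)) (F' (t, x)) t) {a : ℝ → ℝ} {s₀ : ℝ}
    (ha : ContinuousAt a s₀) :
    (fun s => ∫ x in a s..a s₀, (F (s, x) - F (s₀, x))) =o[𝓝 s₀] (fun s => s - s₀) := by
  obtain ⟨C, hC⟩ := exists_abs_sub_le_mul_of_hasDerivAt_fst hF' hFF' s₀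
    (isCompact_Icc (a := a s₀ - 1) (b := a s₀ + 1))
  have hs : ∀ᶠ s in 𝓝 s₀, s ∈ Icc (s₀ - 1) (s₀ + 1) := Icc_mem_nhds (by linarith) (by linarith)
  have has : ∀ᶠ s in 𝓝 s₀, a s ∈ Icc (a s₀ - 1) (a s₀ + 1) :=
    ha.preimage_mem_nhds (Icc_mem_nhds (by linarith) (by linarith))
  have hbigO : (fun s => ∫ x in a s..a s₀, (F (s, x) - F (s₀, x))) =O[𝓝 s₀]
      (fun s => (s - s₀) * (a s - a s₀)) := by
    refine IsBigO.of_bound C ((hs.and has).mono fun s ⟨hs, has⟩ => ?_)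
    have hx : ∀ x ∈ Ι (a s) (a s₀), ‖F (s, x) - F (s₀, x)‖ ≤ C * |s - s₀| := fun x hx =>
      hC s hs x (uIcc_subset_Icc has (mem_Icc.2 ⟨by linarith, by linarith⟩)
        (uIoc_subset_uIcc hx))
    calc ‖∫ x in a s..a s₀, (F (s, x) - F (s₀, x))‖
        ≤ C * |s - s₀| * |a s₀ - a s| := intervalIntegral.norm_integral_le_of_norm_le_const hx
      _ = C * ‖(s - s₀) * (a s - a s₀)‖ := by
        rw [norm_mul, abs_sub_comm (a s₀), Real.norm_eq_abs, Real.norm_eq_abs, mul_assoc]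
  have hsmall : (fun s => (s - s₀) * (a s - a s₀)) =o[𝓝 s₀] (fun s => (s - s₀) * 1) :=
    (isBigO_refl _ _).mul_isLittleO
      ((isLittleO_one_iff ℝ).2 (tendsto_sub_nhds_zero_iff.2 ha))
  simpa only [mul_one] using hbigO.trans_isLittleO hsmall

theorem hasDerivAt_intervalIntegral_param (hF : Continuous F) (hF' : Continuous F')
    (hFF' : ∀ t x, HasDerivAt (fun σ => F (σ, x)) (F' (t, x)) t) (s₀ a b : ℝ) :
    HasDerivAt (fun s => ∫ x in a..b, F (s, x)) (∫ x in a..b, F' (s₀, x)) s₀ := by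
  obtain ⟨C, hC⟩ := (isCompact_Icc (a := s₀ - 1) (b := s₀ + 1) |>.prod
    (isCompact_uIcc (a := a) (b := b))).exists_bound_of_continuousOn hF'.continuousOn
  refine (intervalIntegral.hasDerivAt_integral_of_dominated_loc_of_deriv_le
    (F := fun t x => F (t, x)) (F' := fun t x => F' (t, x)) (bound := fun _ => C)
    (Icc_mem_nhds (a := s₀ - 1) (b := s₀ + 1) (by linarith) (by linarith)) ?_ ?_ ?_ ?_
    intervalIntegrable_const ?_).2
  · exact Eventually.of_forall fun t => (hF.comp (.prodMk_right t)).aestronglyMeasurable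
  · exact (hF.comp (.prodMk_right s₀)).intervalIntegrable a b
  · exact (hF'.comp (.prodMk_right s₀)).aestronglyMeasurable
  · exact Eventually.of_forall fun x hx t ht => hC (t, x) ⟨ht, uIoc_subset_uIcc hx⟩
  · exact Eventually.of_forall fun x _ t _ => hFF' t x

theorem hasDerivAt_intervalIntegral_lower_limit_param (hF : Continuous F)
    (hF' : Continuous F') (hFF' : ∀ t x, HasDerivAt (fun σ => F (σ, x)) (F' (t, x)) t)
    {a : ℝ → ℝ} {a' s₀ : ℝ} (ha : HasDerivAt a a' s₀) (b : ℝ) :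
    HasDerivAt (fun s => ∫ x in a s..b, F (s, x))
      ((∫ x in a s₀..b, F' (s₀, x)) - F (s₀, a s₀) * a') s₀ := by
  set c := a s₀
  have hint : ∀ s u v, IntervalIntegrable (fun x => F (s, x)) volume u v := fun s =>
    (hF.comp (.prodMk_right s)).intervalIntegrable
  have hlimit : HasDerivAt (fun s => ∫ x in a s..c, F (s₀, x)) (-F (s₀, c) * a') s₀ :=
    (intervalIntegral.integral_hasDerivAt_left (hint s₀ c c)
      ((hF.comp (.prodMk_right s₀)).stronglyMeasurableAtFilter _ _)
      (hF.comp (.prodMk_right s₀)).continuousAt).comp s₀ ha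
  have hremainder : HasDerivAt (fun s => ∫ x in a s..c, (F (s, x) - F (s₀, x))) 0 s₀ := by
    simpa [hasDerivAt_iff_isLittleO] using
      isLittleO_intervalIntegral_sub_param hF' hFF' ha.continuousAt
  have hsplit : (fun s => ∫ x in a s..b, F (s, x)) = fun s =>
      (∫ x in a s..c, F (s₀, x)) + (∫ x in a s..c, (F (s, x) - F (s₀, x)))
        + ∫ x in c..b, F (s, x) := by
    funext s
    rw [intervalIntegral.integral_sub (hint s _ _) (hint s₀ _ _),
      ← intervalIntegral.integral_add_adjacent_intervals (hint s (a s) c) (hint s c b)]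
    ring
  rw [hsplit]
  exact ((hlimit.add hremainder).add
    (hasDerivAt_intervalIntegral_param hF hF' hFF' s₀ c b)).congr_deriv (by ring)

end LeibnizRule

theorem setIntegral_Ioi_eq_intervalIntegral_of_eq_zero {f : ℝ → ℝ} {a M : ℝ} (haM : a ≤ M)
    (hf : ∀ x, M < x → f x = 0) : ∫ x in Ioi a, f x = ∫ x in a..M, f x := by
  rw [intervalIntegral.integral_of_le haM]
  exact setIntegral_eq_of_subset_of_forall_sdiff_eq_zero measurableSet_Ioi Ioc_subset_Ioi_self
    fun x ⟨hxa, hxM⟩ => hf x (not_le.1 fun h => hxM ⟨hxa, h⟩)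

theorem HasDerivAt.prodFst {E F : Type*} [NormedAddCommGroup E] [NormedSpace ℝ E]
    [NormedAddCommGroup F] [NormedSpace ℝ F] {f : ℝ → E × F} {f' : E × F} {t : ℝ}
    (h : HasDerivAt f f' t) : HasDerivAt (fun u => (f u).1) f'.1 t :=
  (ContinuousLinearMap.fst ℝ E F).hasFDerivAt.comp_hasDerivAt t h

theorem HasDerivAt.prodSnd {E F : Type*} [NormedAddCommGroup E] [NormedSpace ℝ E]
    [NormedAddCommGroup F] [NormedSpace ℝ F] {f : ℝ → E × F} {f' : E × F} {t : ℝ}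
    (h : HasDerivAt f f' t) : HasDerivAt (fun u => (f u).2) f'.2 t :=
  (ContinuousLinearMap.snd ℝ E F).hasFDerivAt.comp_hasDerivAt t h

section Transport

variable {E : Type*} [NormedAddCommGroup E] [InnerProductSpace ℝ E] {ψ : ℝ × ℝ → E × E}

noncomputable def timeDeriv (ψ : ℝ × ℝ → E × E) (p : ℝ × ℝ) : E × E := fderiv ℝ ψ p (1, 0)

noncomputable def spaceDeriv (ψ : ℝ × ℝ → E × E) (p : ℝ × ℝ) : E × E := fderiv ℝ ψ p (0, 1)

def SolvesTransportAt (ψ : ℝ × ℝ → E × E) (p : ℝ × ℝ) : Prop :=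
  (timeDeriv ψ p).1 = -(spaceDeriv ψ p).1 ∧ (timeDeriv ψ p).2 = (spaceDeriv ψ p).2

def energyDensity (ψ : ℝ × ℝ → E × E) (p : ℝ × ℝ) : ℝ := ‖(ψ p).1‖ ^ 2 + ‖(ψ p).2‖ ^ 2

def fluxDensity (ψ : ℝ × ℝ → E × E) (p : ℝ × ℝ) : ℝ := ‖(ψ p).2‖ ^ 2 - ‖(ψ p).1‖ ^ 2

noncomputable def energyDensityTimeDeriv (ψ : ℝ × ℝ → E × E) (p : ℝ × ℝ) : ℝ :=
  2 * (⟪(ψ p).1, (timeDeriv ψ p).1⟫ + ⟪(ψ p).2, (timeDeriv ψ p).2⟫)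

noncomputable def fluxDensitySpaceDeriv (ψ : ℝ × ℝ → E × E) (p : ℝ × ℝ) : ℝ :=
  2 * (⟪(ψ p).2, (spaceDeriv ψ p).2⟫ - ⟪(ψ p).1, (spaceDeriv ψ p).1⟫)

theorem SolvesTransportAt.energyDensityTimeDeriv_eq {p : ℝ × ℝ} (h : SolvesTransportAt ψ p) :
    energyDensityTimeDeriv ψ p = fluxDensitySpaceDeriv ψ p := by
  rw [energyDensityTimeDeriv, fluxDensitySpaceDeriv, h.1, h.2, inner_neg_right]
  ring

namespace ContDiff

theorem hasDerivAt_timeDeriv (hψ : ContDiff ℝ 1 ψ) (s x : ℝ) :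
    HasDerivAt (fun σ => ψ (σ, x)) (timeDeriv ψ (s, x)) s :=
  (hψ.differentiable one_ne_zero (s, x)).hasFDerivAt.comp_hasDerivAt s
    ((hasDerivAt_id s).prodMk (hasDerivAt_const s x))

theorem hasDerivAt_spaceDeriv (hψ : ContDiff ℝ 1 ψ) (s x : ℝ) :
    HasDerivAt (fun y => ψ (s, y)) (spaceDeriv ψ (s, x)) x :=
  (hψ.differentiable one_ne_zero (s, x)).hasFDerivAt.comp_hasDerivAt x
    ((hasDerivAt_const x s).prodMk (hasDerivAt_id x))

theorem hasDerivAt_energyDensity (hψ : ContDiff ℝ 1 ψ) (s x : ℝ) :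
    HasDerivAt (fun σ => energyDensity ψ (σ, x)) (energyDensityTimeDeriv ψ (s, x)) s := by
  have h := hψ.hasDerivAt_timeDeriv s x
  exact (h.prodFst.norm_sq.add h.prodSnd.norm_sq).congr_deriv (mul_add _ _ _).symm

theorem hasDerivAt_fluxDensity (hψ : ContDiff ℝ 1 ψ) (s x : ℝ) :
    HasDerivAt (fun y => fluxDensity ψ (s, y)) (fluxDensitySpaceDeriv ψ (s, x)) x := by
  have h := hψ.hasDerivAt_spaceDeriv s x
  exact (h.prodSnd.norm_sq.sub h.prodFst.norm_sq).congr_deriv (mul_sub _ _ _).symm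

theorem continuous_energyDensity (hψ : ContDiff ℝ 1 ψ) : Continuous (energyDensity ψ) := by
  have := hψ.continuous
  unfold energyDensity
  fun_prop

theorem continuous_energyDensityTimeDeriv (hψ : ContDiff ℝ 1 ψ) :
    Continuous (energyDensityTimeDeriv ψ) := by
  have := hψ.continuous
  have : Continuous (timeDeriv ψ) :=
    (hψ.continuous_fderiv one_ne_zero).clm_apply continuous_const
  unfold energyDensityTimeDeriv
  fun_prop

theorem continuous_fluxDensitySpaceDeriv (hψ : ContDiff ℝ 1 ψ) :
    Continuous (fluxDensitySpaceDeriv ψ) := by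
  have := hψ.continuous
  have : Continuous (spaceDeriv ψ) :=
    (hψ.continuous_fderiv one_ne_zero).clm_apply continuous_const
  unfold fluxDensitySpaceDeriv
  fun_prop

theorem solvesTransportAt (hψ : ContDiff ℝ 1 ψ) {s x : ℝ}
    (h₁ : deriv (fun σ => (ψ (σ, x)).1) s + deriv (fun y => (ψ (s, y)).1) x = 0)
    (h₂ : deriv (fun σ => (ψ (σ, x)).2) s - deriv (fun y => (ψ (s, y)).2) x = 0) :
    SolvesTransportAt ψ (s, x) := by
  rw [(hψ.hasDerivAt_timeDeriv s x).prodFst.deriv,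
    (hψ.hasDerivAt_spaceDeriv s x).prodFst.deriv] at h₁
  rw [(hψ.hasDerivAt_timeDeriv s x).prodSnd.deriv,
    (hψ.hasDerivAt_spaceDeriv s x).prodSnd.deriv] at h₂
  exact ⟨eq_neg_of_add_eq_zero_left h₁, sub_eq_zero.1 h₂⟩

end ContDiff

theorem hasDerivAt_energy (hψ : ContDiff ℝ 1 ψ) {z : ℝ → ℝ} {v s₀ M : ℝ}
    (hz : HasDerivAt z v s₀) (htransport : ∀ x, z s₀ < x → SolvesTransportAt ψ (s₀, x))
    (hzM : z s₀ < M) (hsupp : ∀ᶠ s in 𝓝 s₀, ∀ x, M ≤ x → ψ (s, x) = 0) :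
    HasDerivAt (fun s => ∫ x in Ioi (z s), energyDensity ψ (s, x))
      (-fluxDensity ψ (s₀, z s₀) - energyDensity ψ (s₀, z s₀) * v) s₀ := by
  have hlocal : (fun s => ∫ x in Ioi (z s), energyDensity ψ (s, x)) =ᶠ[𝓝 s₀]
      fun s => ∫ x in z s..M, energyDensity ψ (s, x) := by
    filter_upwards [hsupp, hz.continuousAt.eventually_lt_const hzM] with s hs hzs
    exact setIntegral_Ioi_eq_intervalIntegral_of_eq_zero hzs.le fun x hx => by
      simp [energyDensity, hs x hx.le]
  have hbalance : ∫ x in z s₀..M, energyDensityTimeDeriv ψ (s₀, x) =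
      fluxDensity ψ (s₀, M) - fluxDensity ψ (s₀, z s₀) := by
    rw [intervalIntegral.integral_congr_ae (g := fun x => fluxDensitySpaceDeriv ψ (s₀, x))
      (ae_of_all _ fun x hx => (htransport x (uIoc_of_le hzM.le ▸ hx).1).energyDensityTimeDeriv_eq)]
    exact intervalIntegral.integral_eq_sub_of_hasDerivAt
      (fun x _ => hψ.hasDerivAt_fluxDensity s₀ x)
      ((hψ.continuous_fluxDensitySpaceDeriv.comp (.prodMk_right s₀)).intervalIntegrable _ _)
  have hM : fluxDensity ψ (s₀, M) = 0 := by simp [fluxDensity, hsupp.self_of_nhds M le_rfl]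
  refine ((hasDerivAt_intervalIntegral_lower_limit_param hψ.continuous_energyDensity
    hψ.continuous_energyDensityTimeDeriv hψ.hasDerivAt_energyDensity hz M).congr_of_eventuallyEq
    hlocal).congr_deriv ?_
  rw [hbalance, hM, zero_sub]

end Transport

theorem norm_sq_mul_one_sub_eq_of_reflection {v : ℝ} (hv₁ : -1 ≤ v) (hv₂ : v < 1) {w₁ w₂ : ℂ}
    (h : w₁ = (√((1 + v) / (1 - v)) : ℂ) * w₂) : ‖w₁‖ ^ 2 * (1 - v) = ‖w₂‖ ^ 2 * (1 + v) := by
  have hv : 0 < 1 - v := by linarith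
  rw [h, norm_mul, mul_pow, Complex.norm_real, Real.norm_eq_abs, sq_abs,
    Real.sq_sqrt (div_nonneg (by linarith) hv.le)]
  field_simp

/-- norm conservation (unitarity of the propagator) for the
free half-line transport system `∂ₛψ + L ∂ₓψ = 0` on `x > z(s)` with the
reflecting boundary condition `ψ₁(s, z(s)) = λ(s) ψ₂(s, z(s))`, where
`λ(s) = ((1+ż(s))/(1−ż(s)))^{1/2}`: along any classical solution the
`L²`-norm `∫_{z(s)}^∞ ‖ψ(s,x)‖² dx` is conserved. -/
theorem transport_norm_conservation
    (z z' : ℝ → ℝ)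
    (hz : ∀ t : ℝ, HasDerivAt z (z' t) t)
    (hz'bound : ∀ t : ℝ, -1 ≤ z' t ∧ z' t ≤ 0)
    (ψ : ℝ × ℝ → ℂ × ℂ)
    (hreg : ContDiff ℝ 1 ψ)
    (heq1 : ∀ s x : ℝ, z s < x →
      deriv (fun σ => (ψ (σ, x)).1) s + deriv (fun y => (ψ (s, y)).1) x = 0)
    (heq2 : ∀ s x : ℝ, z s < x →
      deriv (fun σ => (ψ (σ, x)).2) s - deriv (fun y => (ψ (s, y)).2) x = 0)
    (hbc : ∀ s : ℝ,
      (ψ (s, z s)).1 =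
        (Real.sqrt ((1 + z' s) / (1 - z' s)) : ℂ) * (ψ (s, z s)).2)
    (hsupp : ∃ R : ℝ, ∀ s x : ℝ, R + |s| ≤ x → ψ (s, x) = 0) :
    ∀ s t : ℝ,
      (∫ x in Set.Ioi (z s), (‖(ψ (s, x)).1‖ ^ 2 + ‖(ψ (s, x)).2‖ ^ 2)) =
      (∫ x in Set.Ioi (z t), (‖(ψ (t, x)).1‖ ^ 2 + ‖(ψ (t, x)).2‖ ^ 2)) := by
  obtain ⟨R, hR⟩ := hsupp
  have hconserved : ∀ s₀, HasDerivAt (fun s => ∫ x in Ioi (z s), energyDensity ψ (s, x)) 0 s₀ := by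
    intro s₀
    have htransport : ∀ x, z s₀ < x → SolvesTransportAt ψ (s₀, x) := fun x hx =>
      hreg.solvesTransportAt (heq1 s₀ x hx) (heq2 s₀ x hx)
    have hsupp : ∀ᶠ s in 𝓝 s₀, ∀ x, max (R + |s₀| + 1) (z s₀ + 1) ≤ x → ψ (s, x) = 0 := by
      filter_upwards [Metric.ball_mem_nhds s₀ one_pos] with s hs x hx
      rw [Metric.mem_ball, Real.dist_eq] at hs
      exact hR s x (by
        linarith [abs_sub_abs_le_abs_sub s s₀, le_max_left (R + |s₀| + 1) (z s₀ + 1)])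
    refine (hasDerivAt_energy hreg (hz s₀) htransport
      (lt_max_of_lt_right (lt_add_one _)) hsupp).congr_deriv ?_
    have hreflect := norm_sq_mul_one_sub_eq_of_reflection (hz'bound s₀).1
      ((hz'bound s₀).2.trans_lt one_pos) (hbc s₀)
    simp only [fluxDensity, energyDensity]
    linarith
  exact fun s t => is_const_of_deriv_eq_zero (fun u => (hconserved u).differentiableAt)
    (fun u => (hconserved u).deriv) s t
end
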